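/- There exist constants A₁, A₂ > 0, depending only on n, δ, g, C₀, C₁, γ₀, γ₁, such that for every v = r v̂ with r = |v| ≥ 1, every t ∈ ℝ with |t| ≥ 1, and all ν₁, ν₂ ∈ [0,1]: ‖∇Ṽ^s_{|v|,t}‖_∞ ≤ A₁ (1+|v|^{ν₁/(2−ν₁)}|t|)^{−γ₁(2−ν₁)} + A₂ |v|^{ν₂/(2−ν₂)−1} (1+|v|^{ν₂/(2−ν₂)}|t|)^{−γ₀(2−ν₂)−1}. -/

import Mathlib

open scoped InnerProductSpace
open MeasureTheory Real Filter

noncomputable section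

/-- sup-norm of the gradient of `W` : `‖∇W‖_∞ = sup_x |∇W(x)|`. -/
noncomputable def gradSup {n : ℕ} (W : EuclideanSpace ℝ (Fin n) → ℝ) : ℝ :=
  ⨆ x, ‖fderiv ℝ W x‖

/-- sup-norm of the Laplacian of `W` : `‖ΔW‖_∞ = sup_x |ΔW(x)|`. -/
noncomputable def lapSup {n : ℕ} (W : EuclideanSpace ℝ (Fin n) → ℝ) : ℝ :=
  ⨆ x, |∑ j, fderiv ℝ (fun y => fderiv ℝ W y (EuclideanSpace.single j 1)) x
      (EuclideanSpace.single j 1)|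

/-- the cut-off translated potential
`Ṽ_{|v|,t}(x) = V(x + v t + e₁ t²/2) · g(x/(λ₁|v|⟨t⟩))`, with `v = r·v̂`. -/
noncomputable def cutV {n : ℕ} (V g : EuclideanSpace ℝ (Fin n) → ℝ)
    (lam : ℝ) (vhat e1 : EuclideanSpace ℝ (Fin n)) (r t : ℝ) :
    EuclideanSpace ℝ (Fin n) → ℝ :=
  fun x => V (x + (r * t) • vhat + (t ^ 2 / 2) • e1) *
    g ((lam * r * Real.sqrt (1 + t ^ 2))⁻¹ • x)

/- ------------------- auxiliary lemmas ------------------- -/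

lemma aux_coord_le_norm {n : ℕ} (u : EuclideanSpace ℝ (Fin n)) (j : Fin n) : |u j| ≤ ‖u‖ := by
  rw [EuclideanSpace.norm_eq u, ← Real.sqrt_sq_eq_abs]
  apply Real.sqrt_le_sqrt
  have : |u j|^2 ≤ ∑ i, ‖u i‖^2 :=
    Finset.single_le_sum (f := fun i => ‖u i‖^2) (fun i _ => sq_nonneg _) (Finset.mem_univ j)
  simpa [sq_abs] using this

lemma aux_opnorm_le {n : ℕ} (L : EuclideanSpace ℝ (Fin n) →L[ℝ] ℝ) (M : ℝ) (hM : 0 ≤ M)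
    (h : ∀ j : Fin n, |L (EuclideanSpace.single j 1)| ≤ M) : ‖L‖ ≤ n * M := by
  apply ContinuousLinearMap.opNorm_le_bound _ (by positivity)
  intro u
  have hu : u = ∑ j : Fin n, u j • EuclideanSpace.single j (1:ℝ) := by
    ext i
    rw [WithLp.ofLp_sum, Fintype.sum_apply]
    simp [EuclideanSpace.single_apply]
  calc ‖L u‖ = |∑ j : Fin n, u j * L (EuclideanSpace.single j 1)| := by
        rw [Real.norm_eq_abs]; congr 1
        conv_lhs => rw [hu]
        rw [map_sum]
        simp
    _ ≤ ∑ j : Fin n, |u j * L (EuclideanSpace.single j 1)| := Finset.abs_sum_le_sum_abs _ _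
    _ ≤ ∑ j : Fin n, ‖u‖ * M := by
        apply Finset.sum_le_sum
        intro j _
        rw [abs_mul]
        exact mul_le_mul (aux_coord_le_norm u j) (h j) (abs_nonneg _) (norm_nonneg _)
    _ = n * M * ‖u‖ := by rw [Finset.sum_const]; simp [Finset.card_univ]; ring

lemma aux_grad_g_bound {n : ℕ} (g : EuclideanSpace ℝ (Fin n) → ℝ) (hg : ContDiff ℝ (⊤ : ℕ∞) g)
    (hg4 : ∀ y, 4 ≤ ‖y‖ → g y = 0) :
    ∃ Mg : ℝ, 1 ≤ Mg ∧ ∀ y, ‖fderiv ℝ g y‖ ≤ Mg := by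
  obtain ⟨C, hC⟩ := (isCompact_closedBall (0 : EuclideanSpace ℝ (Fin n)) 5).exists_bound_of_continuousOn
    ((hg.continuous_fderiv (by simp)).continuousOn)
  refine ⟨max C 1, le_max_right _ _, fun y => ?_⟩
  by_cases hy : ‖y‖ ≤ 5
  · exact le_trans (hC y (by simpa [Metric.mem_closedBall, dist_zero_right] using hy)) (le_max_left _ _)
  · have hzero : fderiv ℝ g y = 0 := by
      have hopen : IsOpen {z : EuclideanSpace ℝ (Fin n) | 4 < ‖z‖} :=
        isOpen_lt continuous_const continuous_norm
      have hmem : y ∈ {z : EuclideanSpace ℝ (Fin n) | 4 < ‖z‖} := by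
        simp only [Set.mem_setOf_eq]; linarith [not_le.mp hy]
      have hev : g =ᶠ[nhds y] (fun _ => (0:ℝ)) := by
        filter_upwards [hopen.mem_nhds hmem] with z hz
        exact hg4 z (le_of_lt hz)
      rw [hev.fderiv_eq, fderiv_fun_const]
      rfl
    rw [hzero]
    simp

lemma aux_fderiv_zero_of_far {n : ℕ} (g : EuclideanSpace ℝ (Fin n) → ℝ)
    (hg4 : ∀ y, 4 ≤ ‖y‖ → g y = 0) (y : EuclideanSpace ℝ (Fin n)) (hy : 4 < ‖y‖) :
    fderiv ℝ g y = 0 := by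
  have hopen : IsOpen {z : EuclideanSpace ℝ (Fin n) | 4 < ‖z‖} :=
    isOpen_lt continuous_const continuous_norm
  have hev : g =ᶠ[nhds y] (fun _ => (0:ℝ)) := by
    filter_upwards [hopen.mem_nhds hy] with z hz
    exact hg4 z (le_of_lt hz)
  rw [hev.fderiv_eq, fderiv_fun_const]
  rfl

lemma aux_deriv_formula {n : ℕ} (V g : EuclideanSpace ℝ (Fin n) → ℝ)
    (hV : ContDiff ℝ 1 V) (hg : ContDiff ℝ (⊤ : ℕ∞) g)
    (b c' : EuclideanSpace ℝ (Fin n)) (s : ℝ) (x : EuclideanSpace ℝ (Fin n)) :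
    HasFDerivAt (fun x => V (x + b + c') * g (s • x))
      (V (x + b + c') • ((fderiv ℝ g (s • x)).comp (s • ContinuousLinearMap.id ℝ _)) +
       g (s • x) • fderiv ℝ V (x + b + c')) x := by
  have h1 : HasFDerivAt (fun x : EuclideanSpace ℝ (Fin n) => x + b + c')
      (ContinuousLinearMap.id ℝ _) x := ((hasFDerivAt_id x).add_const b).add_const c'
  have hF : HasFDerivAt (fun x => V (x + b + c')) (fderiv ℝ V (x + b + c')) x := by
    have := ((hV.differentiable (by norm_num) (x + b + c')).hasFDerivAt).comp x h1
    exact this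
  have h2 : HasFDerivAt (fun x : EuclideanSpace ℝ (Fin n) => s • x)
      (s • ContinuousLinearMap.id ℝ _) x := (hasFDerivAt_id x).const_smul s
  have hG : HasFDerivAt (fun x => g (s • x))
      ((fderiv ℝ g (s • x)).comp (s • ContinuousLinearMap.id ℝ _)) x :=
    ((hg.differentiable (by simp) (s • x)).hasFDerivAt).comp x h2
  exact hF.mul hG

lemma aux_two_rpow_le_four {e : ℝ} (he : e ≤ 2) : (2:ℝ) ^ e ≤ 4 := by
  have h4 : (2:ℝ) ^ (2:ℝ) = 4 := by
    rw [show (2:ℝ) = ((2:ℕ):ℝ) from by norm_num]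
    rw [Real.rpow_natCast]
    norm_num
  calc (2:ℝ) ^ e ≤ (2:ℝ) ^ (2:ℝ) := Real.rpow_le_rpow_of_exponent_le one_le_two he
    _ = 4 := h4

lemma aux_interp (r t ν : ℝ) (hr : 1 ≤ r) (ht : 1 ≤ t) (hν0 : 0 ≤ ν) (hν1 : ν ≤ 1) :
    (1 + r ^ (ν/(2-ν)) * t) ^ (2-ν) ≤ 4 * (max r t * t) := by
  have h2ν0 : (0:ℝ) < 2 - ν := by linarith
  have hs : 0 ≤ ν / (2-ν) := div_nonneg hν0 h2ν0.le
  have hr0 : (0:ℝ) < r := by linarith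
  have ht0 : (0:ℝ) < t := by linarith
  have hrs : 1 ≤ r ^ (ν/(2-ν)) := Real.one_le_rpow hr hs
  have hX : 1 ≤ r ^ (ν/(2-ν)) * t := one_le_mul_of_one_le_of_one_le hrs ht
  set X := r ^ (ν/(2-ν)) * t with hXdef
  have hX0 : 0 < X := by positivity
  have hsm : (ν/(2-ν)) * (2-ν) = ν := by field_simp
  have h1 : (1 + X) ^ (2-ν) ≤ (2*X) ^ (2-ν) :=
    Real.rpow_le_rpow (by positivity) (by linarith) h2ν0.le
  have h2 : (2*X) ^ (2-ν) = 2 ^ (2-ν) * (r ^ ν * t ^ (2-ν)) := by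
    rw [Real.mul_rpow (by norm_num) hX0.le, hXdef,
        Real.mul_rpow (by positivity) ht0.le, ← Real.rpow_mul hr0.le, hsm]
  set M := max r t with hMdef
  have hM1 : 1 ≤ M := le_trans hr (le_max_left _ _)
  have hM0 : (0:ℝ) < M := by linarith
  have htsplit : t ^ (2-ν) = t * t ^ (1-ν) := by
    rw [show (2-ν) = 1 + (1-ν) from by ring, Real.rpow_add ht0, Real.rpow_one]
  have h3 : r ^ ν * t ^ (2-ν) ≤ M * t := by
    calc r ^ ν * t ^ (2-ν) = (r ^ ν * t ^ (1-ν)) * t := by rw [htsplit]; ring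
      _ ≤ (M ^ ν * M ^ (1-ν)) * t := by
          have ha : r ^ ν ≤ M ^ ν := Real.rpow_le_rpow hr0.le (le_max_left _ _) hν0
          have hb : t ^ (1-ν) ≤ M ^ (1-ν) :=
            Real.rpow_le_rpow ht0.le (le_max_right _ _) (by linarith)
          have := mul_le_mul ha hb (by positivity) (by positivity)
          exact mul_le_mul_of_nonneg_right this ht0.le
      _ = M * t := by
          rw [← Real.rpow_add hM0, show ν + (1-ν) = 1 from by ring, Real.rpow_one]
  calc (1 + X) ^ (2-ν) ≤ 2 ^ (2-ν) * (r ^ ν * t ^ (2-ν)) := by rw [← h2]; exact h1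
    _ ≤ 4 * (M * t) := by
        apply mul_le_mul (aux_two_rpow_le_four (by linarith)) h3 (by positivity) (by norm_num)

lemma aux_neg_pow_bound (Z Y B γ ν : ℝ) (hZ : 0 < Z) (hY : 0 < Y) (hB : 1 ≤ B)
    (h : Z ^ (2-ν) ≤ B * Y) (hγ0 : 0 < γ) (hγ2 : γ ≤ 2) :
    Y ^ (-γ) ≤ B ^ (2:ℝ) * Z ^ (-(γ*(2-ν))) := by
  have hB0 : (0:ℝ) < B := by linarith
  have h1 : Z ^ (2-ν) / B ≤ Y := by rw [div_le_iff₀ hB0]; linarith [h]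
  have hq : (0:ℝ) < Z ^ (2-ν) / B := by positivity
  have h2 : Y ^ (-γ) ≤ (Z ^ (2-ν) / B) ^ (-γ) :=
    Real.rpow_le_rpow_of_nonpos hq h1 (by linarith)
  calc Y ^ (-γ) ≤ (Z ^ (2-ν) / B) ^ (-γ) := h2
    _ = (Z ^ (2-ν)) ^ (-γ) * B ^ γ := by
        rw [Real.div_rpow (by positivity) hB0.le, Real.rpow_neg hB0.le γ]
        field_simp
    _ = Z ^ (-(γ*(2-ν))) * B ^ γ := by
        rw [← Real.rpow_mul hZ.le]
        ring_nf
    _ ≤ Z ^ (-(γ*(2-ν))) * B ^ (2:ℝ) := by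
        exact mul_le_mul_of_nonneg_left (Real.rpow_le_rpow_of_exponent_le hB hγ2) (by positivity)
    _ = B ^ (2:ℝ) * Z ^ (-(γ*(2-ν))) := mul_comm _ _

set_option maxHeartbeats 1000000 in
lemma aux_norm_a_lb {n : ℕ} (vhat e1 : EuclideanSpace ℝ (Fin n)) (hvhat : ‖vhat‖ = 1)
    (he1 : ‖e1‖ = 1) (δ : ℝ) (hδ : δ = |⟪vhat, e1⟫_ℝ|) (hδ1 : δ < 1)
    (r t : ℝ) (hr : 1 ≤ r) (ht : 1 ≤ |t|) :
    (Real.sqrt (1-δ)/2) * (|t| * max r |t|) ≤ ‖(r*t) • vhat + (t^2/2) • e1‖ := by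
  have hδ0 : 0 ≤ δ := hδ ▸ abs_nonneg _
  have hr0 : (0:ℝ) < r := by linarith
  have ht2 : 1 ≤ t^2 := by nlinarith [sq_abs t]
  set ip := ⟪vhat, e1⟫_ℝ with hip
  have hipb : |ip| = δ := hδ.symm
  have hsq : ‖(r*t) • vhat + (t^2/2) • e1‖^2
      = (r*t)^2 + 2*((r*t)*(t^2/2)*ip) + (t^2/2)^2 := by
    rw [norm_add_sq_real, real_inner_smul_left, real_inner_smul_right,
      norm_smul, norm_smul, hvhat, he1]
    simp only [Real.norm_eq_abs, mul_one]
    rw [sq_abs, sq_abs, ← hip]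
    ring
  set M := max r |t| with hM
  have hMsq : M^2 ≤ r^2 + t^2 := by
    rcases max_cases r (abs t) with ⟨h1, _⟩ | ⟨h1, _⟩ <;> rw [hM, h1]
    · linarith [sq_nonneg t]
    · linarith [sq_abs t, sq_nonneg r]
  have habs : |r * t * (t^2/2) * ip| = r * |t| * (t^2/2) * δ := by
    rw [abs_mul, abs_mul, abs_mul, hipb, abs_of_pos hr0,
      abs_of_nonneg (by positivity : (0:ℝ) ≤ t^2/2)]
  have hlow : -(r * |t| * (t^2/2) * δ) ≤ r * t * (t^2/2) * ip := by
    rw [← habs]; exact neg_abs_le _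
  have hu : |t|^2 = t^2 := sq_abs t
  have hu4 : t^4 = |t|^4 := by rw [show (4:ℕ) = 2*2 from rfl, pow_mul, pow_mul, hu]
  have step1 : r^2*t^2 - δ*(r*|t|)*t^2 + t^4/4 ≤ (r*t)^2 + 2*(r*t*(t^2/2)*ip) + (t^2/2)^2 := by
    linarith [hlow]
  have step2' : (1-δ)*(r^2*|t|^2 + |t|^4/4) ≤ r^2*|t|^2 - δ*r*|t|^3 + |t|^4/4 := by
    linarith [mul_nonneg hδ0 (sq_nonneg (r * |t| - |t|^2/2))]
  have c1 : r^2*|t|^2 = r^2*t^2 := by rw [hu]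
  have c2 : δ*r*|t|^3 = δ*(r*|t|)*t^2 := by rw [← hu]; ring
  have c3 : (1-δ)*(r^2*|t|^2 + |t|^4/4) = (1-δ)*(r^2*t^2 + t^4/4) := by rw [hu, ← hu4]
  have step2 : (1-δ)*(r^2*t^2 + t^4/4) ≤ r^2*t^2 - δ*(r*|t|)*t^2 + t^4/4 := by
    rw [← c3]
    linarith [step2', c1, c2, hu4]
  have step3 : ((1-δ)/4) * (t^2*M^2) ≤ (1-δ)*(r^2*t^2 + t^4/4) := by
    have key := mul_le_mul_of_nonneg_left (mul_le_mul_of_nonneg_left hMsq (sq_nonneg t))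
      (by linarith : (0:ℝ) ≤ (1-δ)/4)
    have p : 0 ≤ (1-δ)*(r^2*t^2) := mul_nonneg (by linarith) (mul_nonneg (sq_nonneg r) (sq_nonneg t))
    linarith [key, p]
  have hsqlb : ((1-δ)/4) * (t^2 * M^2) ≤ ‖(r*t) • vhat + (t^2/2) • e1‖^2 := by
    rw [hsq]
    linarith [step1, step2, step3]
  have hL0 : 0 ≤ (Real.sqrt (1-δ)/2) * (|t| * M) := by positivity
  have hLsq : ((Real.sqrt (1-δ)/2) * (|t| * M))^2 = ((1-δ)/4) * (t^2 * M^2) := by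
    rw [mul_pow, mul_pow, div_pow, Real.sq_sqrt (by linarith : (0:ℝ) ≤ 1-δ), sq_abs]
    ring
  calc (Real.sqrt (1-δ)/2) * (|t| * M)
      = Real.sqrt (((Real.sqrt (1-δ)/2) * (|t| * M))^2) := (Real.sqrt_sq hL0).symm
    _ ≤ Real.sqrt (‖(r*t) • vhat + (t^2/2) • e1‖^2) := by
        apply Real.sqrt_le_sqrt; rw [hLsq]; exact hsqlb
    _ = ‖(r*t) • vhat + (t^2/2) • e1‖ := Real.sqrt_sq (norm_nonneg _)

set_option maxHeartbeats 2000000 in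
theorem stmt_3 (n : ℕ) (hn : 2 ≤ n)
    (e1 : EuclideanSpace ℝ (Fin n))
    (he1 : e1 = EuclideanSpace.single ⟨0, by omega⟩ (1 : ℝ))
    (vhat : EuclideanSpace ℝ (Fin n)) (hvhat : ‖vhat‖ = 1)
    (δ : ℝ) (hδ : δ = |⟪vhat, e1⟫_ℝ|) (hδ1 : δ < 1)
    (lam : ℝ) (hlam : lam = (1 - δ) / (16 * Real.sqrt 2))
    (g : EuclideanSpace ℝ (Fin n) → ℝ) (hg : ContDiff ℝ (⊤ : ℕ∞) g)
    (hg0 : ∀ y, 0 ≤ g y) (hg1 : ∀ y, g y ≤ 1)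
    (hg3 : ∀ y, ‖y‖ ≤ 3 → g y = 1) (hg4 : ∀ y, 4 ≤ ‖y‖ → g y = 0)
    (Vs : EuclideanSpace ℝ (Fin n) → ℝ) (hVs : ContDiff ℝ 1 Vs)
    (C0 C1 γ0 γ1 : ℝ) (hC0 : 0 < C0) (hC1 : 0 < C1)
    (hγ0 : 1 / 2 < γ0) (hγ0' : γ0 ≤ 1) (hγ1 : 1 < γ1) (hγ1' : γ1 ≤ 1 + γ0)
    (hVb : ∀ x, |Vs x| ≤ C0 * Real.sqrt (1 + ‖x‖ ^ 2) ^ (-γ0))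
    (hVd : ∀ x, ∀ j : Fin n,
      |fderiv ℝ Vs x (EuclideanSpace.single j 1)| ≤
        C1 * Real.sqrt (1 + ‖x‖ ^ 2) ^ (-γ1)) :
    ∃ A1 > (0 : ℝ), ∃ A2 > (0 : ℝ), ∀ r : ℝ, 1 ≤ r → ∀ t : ℝ, 1 ≤ |t| →
      ∀ ν1 ∈ Set.Icc (0 : ℝ) 1, ∀ ν2 ∈ Set.Icc (0 : ℝ) 1,
        gradSup (cutV Vs g lam vhat e1 r t) ≤
          A1 * (1 + r ^ (ν1 / (2 - ν1)) * |t|) ^ (-(γ1 * (2 - ν1))) +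
          A2 * r ^ (ν2 / (2 - ν2) - 1) *
            (1 + r ^ (ν2 / (2 - ν2)) * |t|) ^ (-(γ0 * (2 - ν2)) - 1) := by
  obtain ⟨Mg, hMg1, hMgb⟩ := aux_grad_g_bound g hg hg4
  have hδ0 : 0 ≤ δ := hδ ▸ abs_nonneg _
  have h1δ : (0:ℝ) < 1 - δ := by linarith
  have hlam0 : 0 < lam := by rw [hlam]; positivity
  have hsd : 0 < Real.sqrt (1-δ) := Real.sqrt_pos.mpr h1δ
  have hsd1 : Real.sqrt (1-δ) ≤ 1 := by
    have h := Real.sqrt_le_sqrt (by linarith : (1:ℝ)-δ ≤ 1)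
    rwa [Real.sqrt_one] at h
  set B : ℝ := 16 / Real.sqrt (1-δ) with hBdef
  have hB1 : 1 ≤ B := by rw [hBdef, le_div_iff₀ hsd]; linarith
  have hB0 : (0:ℝ) < B := by linarith
  have hBp : (0:ℝ) < B ^ (2:ℝ) := Real.rpow_pos_of_pos hB0 _
  have hn0 : (0:ℝ) < n := by exact_mod_cast (by omega : 0 < n)
  have hMg0 : (0:ℝ) < Mg := lt_of_lt_of_le one_pos hMg1
  have he1n : ‖e1‖ = 1 := by rw [he1, EuclideanSpace.norm_single]; norm_num
  have hA1 : (0:ℝ) < n * C1 * B ^ (2:ℝ) := mul_pos (mul_pos hn0 hC1) hBp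
  have hA2 : (0:ℝ) < 2 * C0 * Mg * B ^ (2:ℝ) / lam :=
    div_pos (mul_pos (mul_pos (mul_pos two_pos hC0) hMg0) hBp) hlam0
  refine ⟨n * C1 * B ^ (2:ℝ), hA1, 2 * C0 * Mg * B ^ (2:ℝ) / lam, hA2, ?_⟩
  intro r hr t ht ν1 hν1 ν2 hν2
  obtain ⟨hν10, hν11⟩ := hν1
  obtain ⟨hν20, hν21⟩ := hν2
  have hr0 : (0:ℝ) < r := by linarith
  have ht0 : (0:ℝ) < |t| := by linarith
  have ht2 : 1 ≤ t^2 := by nlinarith [sq_abs t]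
  have hT1 : |t| ≤ Real.sqrt (1 + t^2) := by
    rw [← Real.sqrt_sq_eq_abs]
    exact Real.sqrt_le_sqrt (by linarith)
  have hT2 : Real.sqrt (1 + t^2) ≤ Real.sqrt 2 * |t| := by
    rw [← Real.sqrt_sq_eq_abs, ← Real.sqrt_mul (by norm_num : (0:ℝ) ≤ 2)]
    exact Real.sqrt_le_sqrt (by linarith)
  have hTpos : 0 < Real.sqrt (1 + t^2) := lt_of_lt_of_le ht0 hT1
  set s : ℝ := (lam * r * Real.sqrt (1 + t^2))⁻¹ with hsdef
  have hP : (0:ℝ) < lam * r * Real.sqrt (1 + t^2) := by positivity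
  have hs0 : 0 < s := by rw [hsdef]; positivity
  -- positivity of the bases
  have hrs1nn : 0 ≤ r ^ (ν1/(2-ν1)) * |t| := mul_nonneg (Real.rpow_nonneg hr0.le _) (abs_nonneg t)
  have hrs2nn : 0 ≤ r ^ (ν2/(2-ν2)) * |t| := mul_nonneg (Real.rpow_nonneg hr0.le _) (abs_nonneg t)
  have hZ1 : (0:ℝ) < 1 + r ^ (ν1/(2-ν1)) * |t| := by linarith
  have hZ2 : (0:ℝ) < 1 + r ^ (ν2/(2-ν2)) * |t| := by linarith
  have hRHSnn : 0 ≤ n * C1 * B ^ (2:ℝ) * (1 + r ^ (ν1 / (2 - ν1)) * |t|) ^ (-(γ1 * (2 - ν1))) +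
      2 * C0 * Mg * B ^ (2:ℝ) / lam * r ^ (ν2 / (2 - ν2) - 1) *
        (1 + r ^ (ν2 / (2 - ν2)) * |t|) ^ (-(γ0 * (2 - ν2)) - 1) := by
    apply add_nonneg
    · exact mul_nonneg hA1.le (Real.rpow_nonneg hZ1.le _)
    · exact mul_nonneg (mul_nonneg hA2.le (Real.rpow_nonneg hr0.le _)) (Real.rpow_nonneg hZ2.le _)
  -- pointwise bound
  apply ciSup_le
  intro x
  have hD := aux_deriv_formula Vs g hVs hg ((r*t) • vhat) ((t^2/2) • e1) s x
  have hfd : fderiv ℝ (cutV Vs g lam vhat e1 r t) x =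
      Vs (x + (r*t) • vhat + (t^2/2) • e1) •
        ((fderiv ℝ g (s • x)).comp (s • ContinuousLinearMap.id ℝ _)) +
      g (s • x) • fderiv ℝ Vs (x + (r*t) • vhat + (t^2/2) • e1) := hD.fderiv
  rw [hfd]
  set y := x + (r*t) • vhat + (t^2/2) • e1 with hydef
  set Y := Real.sqrt (1 + ‖y‖^2) with hYdef
  have hYpos : 0 < Y := Real.sqrt_pos.mpr (by positivity)
  have hYy : ‖y‖ ≤ Y := by
    have h1 : ‖y‖^2 ≤ 1 + ‖y‖^2 := by linarith [sq_nonneg (1:ℝ)]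
    calc ‖y‖ = Real.sqrt (‖y‖^2) := (Real.sqrt_sq (norm_nonneg y)).symm
      _ ≤ Real.sqrt (1 + ‖y‖^2) := Real.sqrt_le_sqrt h1
      _ = Y := hYdef.symm
  have hnD : ‖Vs y • ((fderiv ℝ g (s • x)).comp (s • ContinuousLinearMap.id ℝ _)) +
      g (s • x) • fderiv ℝ Vs y‖ ≤
      |Vs y| * (s * ‖fderiv ℝ g (s • x)‖) + g (s • x) * ‖fderiv ℝ Vs y‖ := by
    refine le_trans (norm_add_le _ _) (add_le_add ?_ ?_)
    · rw [norm_smul, Real.norm_eq_abs]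
      apply mul_le_mul_of_nonneg_left _ (abs_nonneg _)
      calc ‖(fderiv ℝ g (s • x)).comp (s • ContinuousLinearMap.id ℝ _)‖
          ≤ ‖fderiv ℝ g (s • x)‖ * ‖s • ContinuousLinearMap.id ℝ (EuclideanSpace ℝ (Fin n))‖ :=
            ContinuousLinearMap.opNorm_comp_le _ _
        _ ≤ ‖fderiv ℝ g (s • x)‖ * s := by
            apply mul_le_mul_of_nonneg_left _ (norm_nonneg _)
            refine le_trans (ContinuousLinearMap.opNorm_smul_le _ _) ?_
            rw [Real.norm_eq_abs, abs_of_pos hs0]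
            calc s * ‖ContinuousLinearMap.id ℝ (EuclideanSpace ℝ (Fin n))‖ ≤ s * 1 :=
                mul_le_mul_of_nonneg_left (ContinuousLinearMap.norm_id_le) hs0.le
              _ = s := mul_one s
        _ = s * ‖fderiv ℝ g (s • x)‖ := mul_comm _ _
    · rw [norm_smul, Real.norm_eq_abs, abs_of_nonneg (hg0 _)]
  have hFb : ‖fderiv ℝ Vs y‖ ≤ n * (C1 * Y ^ (-γ1)) := by
    apply aux_opnorm_le _ _ (mul_nonneg hC1.le (Real.rpow_nonneg (Real.sqrt_nonneg _) _))
    intro j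
    exact hVd y j
  by_cases hcase : ‖s • x‖ ≤ 4
  · -- main case : inside the support of the cutoff
    have hsx : s * ‖x‖ ≤ 4 := by
      rw [norm_smul, Real.norm_eq_abs, abs_of_pos hs0] at hcase
      exact hcase
    have hx4 : ‖x‖ ≤ 4 * (lam * r * Real.sqrt (1 + t^2)) := by
      rw [hsdef] at hsx
      rw [inv_mul_le_iff₀ hP] at hsx
      linarith [hsx]
    have hs2pos : (0:ℝ) < Real.sqrt 2 := by positivity
    have hlamval : 4 * lam * Real.sqrt 2 = (1-δ)/4 := by
      rw [hlam]
      field_simp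
      ring
    have hsqd : 1 - δ ≤ Real.sqrt (1-δ) := by
      have h := mul_le_mul_of_nonneg_left hsd1 hsd.le
      rw [mul_one] at h
      calc 1 - δ = Real.sqrt (1-δ) * Real.sqrt (1-δ) := (Real.mul_self_sqrt h1δ.le).symm
        _ ≤ Real.sqrt (1-δ) := h
    have hrM : r ≤ max r |t| := le_max_left _ _
    have htM : |t| ≤ max r |t| := le_max_right _ _
    have hM0 : (0:ℝ) < max r |t| := lt_of_lt_of_le hr0 hrM
    have hxb : ‖x‖ ≤ (Real.sqrt (1-δ)/4) * (|t| * max r |t|) := by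
      have e1' : 4 * (lam * r * Real.sqrt (1 + t^2)) ≤ 4 * (lam * r * (Real.sqrt 2 * |t|)) := by
        apply mul_le_mul_of_nonneg_left _ (by norm_num)
        exact mul_le_mul_of_nonneg_left hT2 (by positivity)
      have e2 : 4 * (lam * r * (Real.sqrt 2 * |t|)) = (4 * lam * Real.sqrt 2) * (r * |t|) := by ring
      have e3 : (4 * lam * Real.sqrt 2) * (r * |t|) ≤ (Real.sqrt (1-δ)/4) * (r * |t|) := by
        apply mul_le_mul_of_nonneg_right _ (by positivity)
        rw [hlamval]; linarith
      have e4 : (Real.sqrt (1-δ)/4) * (r * |t|) ≤ (Real.sqrt (1-δ)/4) * (|t| * max r |t|) := by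
        apply mul_le_mul_of_nonneg_left _ (by positivity)
        calc r * |t| ≤ max r |t| * |t| := mul_le_mul_of_nonneg_right hrM (abs_nonneg t)
          _ = |t| * max r |t| := mul_comm _ _
      linarith [hx4, e1', e3, e4, e2.le, e2.ge]
    have hab := aux_norm_a_lb vhat e1 hvhat he1n δ hδ hδ1 r t hr ht
    have hya : (Real.sqrt (1-δ)/4) * (|t| * max r |t|) ≤ ‖y‖ := by
      have hdiff : ‖(r*t) • vhat + (t^2/2) • e1‖ ≤ ‖y‖ + ‖x‖ := by
        have : (r*t) • vhat + (t^2/2) • e1 = y - x := by rw [hydef]; abel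
        rw [this]
        exact norm_sub_le _ _
      linarith [hdiff, hxb, hab]
    -- key comparison
    have key : ∀ ν : ℝ, 0 ≤ ν → ν ≤ 1 → ∀ γ : ℝ, 0 < γ → γ ≤ 2 →
        Y ^ (-γ) ≤ B ^ (2:ℝ) * (1 + r ^ (ν/(2-ν)) * |t|) ^ (-(γ*(2-ν))) := by
      intro ν h0 h1 γ hga hgb
      have hZpos : (0:ℝ) < 1 + r ^ (ν/(2-ν)) * |t| := by
        have := mul_nonneg (Real.rpow_nonneg hr0.le (ν/(2-ν))) (abs_nonneg t)
        linarith
      apply aux_neg_pow_bound _ _ _ _ _ hZpos hYpos hB1 _ hga hgb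
      calc (1 + r ^ (ν/(2-ν)) * |t|) ^ (2-ν) ≤ 4 * (max r |t| * |t|) :=
            aux_interp r |t| ν hr ht h0 h1
        _ = B * ((Real.sqrt (1-δ)/4) * (|t| * max r |t|)) := by
            rw [hBdef]; field_simp; ring
        _ ≤ B * Y := mul_le_mul_of_nonneg_left (le_trans hya hYy) hB0.le
    -- term 1
    have hterm1 : g (s • x) * ‖fderiv ℝ Vs y‖ ≤
        n * C1 * B ^ (2:ℝ) * (1 + r ^ (ν1/(2-ν1)) * |t|) ^ (-(γ1 * (2-ν1))) := by
      calc g (s • x) * ‖fderiv ℝ Vs y‖ ≤ 1 * (n * (C1 * Y ^ (-γ1))) :=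
            mul_le_mul (hg1 _) hFb (norm_nonneg _) zero_le_one
        _ = n * C1 * Y ^ (-γ1) := by ring
        _ ≤ n * C1 * (B ^ (2:ℝ) * (1 + r ^ (ν1/(2-ν1)) * |t|) ^ (-(γ1 * (2-ν1)))) := by
            apply mul_le_mul_of_nonneg_left
              (key ν1 hν10 hν11 γ1 (by linarith) (by linarith)) (by positivity)
        _ = n * C1 * B ^ (2:ℝ) * (1 + r ^ (ν1/(2-ν1)) * |t|) ^ (-(γ1 * (2-ν1))) := by ring
    -- term 2
    have hsle : s ≤ (lam * (r * |t|))⁻¹ := by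
      rw [hsdef]
      apply inv_anti₀ (by positivity)
      calc lam * (r * |t|) = lam * r * |t| := by ring
        _ ≤ lam * r * Real.sqrt (1 + t^2) := mul_le_mul_of_nonneg_left hT1 (by positivity)
    set s2 : ℝ := ν2/(2-ν2) with hs2def
    have h2ν2 : (0:ℝ) < 2 - ν2 := by linarith
    have hs2nn : 0 ≤ s2 := div_nonneg hν20 h2ν2.le
    have hrs2 : 1 ≤ r ^ s2 := Real.one_le_rpow hr hs2nn
    set X2 : ℝ := r ^ s2 * |t| with hX2def
    have hX2one : 1 ≤ X2 := one_le_mul_of_one_le_of_one_le hrs2 ht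
    have hX2pos : (0:ℝ) < X2 := by linarith
    have hE2 : (0:ℝ) < 1 + X2 := by linarith
    have hrr : r ^ (s2 - 1) * r = r ^ s2 := by
      nth_rewrite 2 [← Real.rpow_one r]
      rw [← Real.rpow_add hr0]
      ring_nf
    have hinv : (lam * (r * |t|))⁻¹ * (1 + X2) ^ (-(γ0*(2-ν2))) ≤
        (2/lam) * r ^ (s2-1) * (1 + X2) ^ (-(γ0*(2-ν2)) - 1) := by
      have hsplit : (1 + X2) ^ (-(γ0*(2-ν2)) - 1) =
          (1 + X2) ^ (-(γ0*(2-ν2))) * (1 + X2)⁻¹ := by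
        rw [show -(γ0*(2-ν2)) - 1 = -(γ0*(2-ν2)) + (-1) from by ring,
          Real.rpow_add hE2, Real.rpow_neg_one]
      rw [hsplit]
      rw [show (2/lam) * r ^ (s2-1) * ((1 + X2) ^ (-(γ0*(2-ν2))) * (1 + X2)⁻¹) =
        ((2/lam) * r ^ (s2-1) * (1 + X2)⁻¹) * (1 + X2) ^ (-(γ0*(2-ν2))) from by ring]
      rw [show (lam * (r * |t|))⁻¹ * (1 + X2) ^ (-(γ0*(2-ν2))) =
        (lam * (r * |t|))⁻¹ * (1 + X2) ^ (-(γ0*(2-ν2))) from rfl]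
      apply mul_le_mul_of_nonneg_right _ (Real.rpow_nonneg hE2.le _)
      -- (lam * (r * |t|))⁻¹ ≤ 2/lam * r^(s2-1) * (1+X2)⁻¹
      rw [inv_eq_one_div, show (2/lam) * r ^ (s2-1) * (1 + X2)⁻¹ =
        (2 * r ^ (s2-1) / lam) / (1 + X2) from by field_simp]
      rw [div_le_div_iff₀ (by positivity) hE2]
      calc 1 * (1 + X2) ≤ 2 * X2 := by linarith
        _ = 2 * r ^ s2 * |t| := by rw [hX2def]; ring
        _ = 2 * (r ^ (s2-1) * r) * |t| := by rw [hrr]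
        _ = 2 * r ^ (s2-1) / lam * (lam * (r * |t|)) := by field_simp
    have hterm2 : |Vs y| * (s * ‖fderiv ℝ g (s • x)‖) ≤
        2 * C0 * Mg * B ^ (2:ℝ) / lam * r ^ (s2 - 1) *
          (1 + X2) ^ (-(γ0 * (2-ν2)) - 1) := by
      calc |Vs y| * (s * ‖fderiv ℝ g (s • x)‖)
          ≤ (C0 * Y ^ (-γ0)) * ((lam * (r * |t|))⁻¹ * Mg) := by
            apply mul_le_mul (hVb y)
              (mul_le_mul hsle (hMgb _) (norm_nonneg _) (by positivity))
              (mul_nonneg hs0.le (norm_nonneg _))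
              (mul_nonneg hC0.le (Real.rpow_nonneg (Real.sqrt_nonneg _) _))
        _ = C0 * Mg * (Y ^ (-γ0) * (lam * (r * |t|))⁻¹) := by ring
        _ ≤ C0 * Mg * ((B ^ (2:ℝ) * (1 + X2) ^ (-(γ0*(2-ν2)))) * (lam * (r * |t|))⁻¹) := by
            apply mul_le_mul_of_nonneg_left _ (by positivity)
            apply mul_le_mul_of_nonneg_right
              (key ν2 hν20 hν21 γ0 (by linarith) (by linarith)) (by positivity)
        _ = C0 * Mg * B ^ (2:ℝ) * ((lam * (r * |t|))⁻¹ * (1 + X2) ^ (-(γ0*(2-ν2)))) := by ring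
        _ ≤ C0 * Mg * B ^ (2:ℝ) * ((2/lam) * r ^ (s2-1) * (1 + X2) ^ (-(γ0*(2-ν2)) - 1)) := by
            apply mul_le_mul_of_nonneg_left hinv (by positivity)
        _ = 2 * C0 * Mg * B ^ (2:ℝ) / lam * r ^ (s2 - 1) *
              (1 + X2) ^ (-(γ0 * (2-ν2)) - 1) := by ring
    calc ‖Vs y • ((fderiv ℝ g (s • x)).comp (s • ContinuousLinearMap.id ℝ _)) +
        g (s • x) • fderiv ℝ Vs y‖
        ≤ |Vs y| * (s * ‖fderiv ℝ g (s • x)‖) + g (s • x) * ‖fderiv ℝ Vs y‖ := hnD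
      _ ≤ (2 * C0 * Mg * B ^ (2:ℝ) / lam * r ^ (s2 - 1) *
              (1 + X2) ^ (-(γ0 * (2-ν2)) - 1)) +
          (n * C1 * B ^ (2:ℝ) * (1 + r ^ (ν1/(2-ν1)) * |t|) ^ (-(γ1 * (2-ν1)))) :=
        add_le_add hterm2 hterm1
      _ = n * C1 * B ^ (2:ℝ) * (1 + r ^ (ν1 / (2 - ν1)) * |t|) ^ (-(γ1 * (2 - ν1))) +
          2 * C0 * Mg * B ^ (2:ℝ) / lam * r ^ (ν2 / (2 - ν2) - 1) *
            (1 + r ^ (ν2 / (2 - ν2)) * |t|) ^ (-(γ0 * (2 - ν2)) - 1) := by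
        rw [hs2def, hX2def]
        ring
  · -- outside the support : the derivative vanishes
    push_neg at hcase
    have hgz : g (s • x) = 0 := hg4 _ hcase.le
    have hdz : fderiv ℝ g (s • x) = 0 := aux_fderiv_zero_of_far g hg4 _ hcase
    rw [hgz, hdz] at *
    simp only [ContinuousLinearMap.zero_comp, smul_zero, zero_smul, add_zero, norm_zero]
    exact hRHSnn

end
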